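/- Let G be a subgroup of the piecewise-linear orientation-preserving homeomorphisms of [0,1]. If supt G' = supt G, then the second derived subgroup G'' equals the third derived subgroup G''', i.e. G'' is perfect; moreover supt G'' = supt G. -/

import Mathlib

/-!
Write `H = G'`. The algebraic core is a displacement trick: if every finite `F ⊆ H` is moved off
its own support by some `w ∈ H`, then for `f, g ∈ H` one finds `h, k ∈ H` such that `f` commutes
with `h g h⁻¹`, and `k f k⁻¹` commutes with `g` and with `h g h⁻¹`. This gives
`⁅f, g⁆ = ⁅f, ⁅g, h⁆⁆ = ⁅⁅f, k⁆, ⁅g, h⁆⁆ ∈ H''`, so `H' = H''`. Moreover `⁅f, w⁆` agrees with `f`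
on the support of `f`, so `supt H' = supt H = supt G`.

Displacement in `G'` comes from one-dimensional dynamics. At a point `c` fixed by `G`, the
one-sided slopes of the elements of `G` multiply under composition, so the elements of `G'` have
slope `1` on both sides of `c` and are the identity near `c`. As `supt G' = supt G`, the closure
of the support of a finite `F ⊆ G'` is a compact subset of `supt G'`, so it meets finitely many
components of `supt G'`, and in each of them it lies in an interval `[p, q]`. In a component the
`G'`-orbit of `p` goes past `q`: otherwise its supremum would be a point of `supt G'` that some
element of `G'` pushes upward, along with the orbit points close to it. Induction over the
components then moves all these intervals off themselves at once.
-/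

open Set

def IsPL (f : Equiv.Perm (Icc (0:ℝ) 1)) : Prop :=
  ∃ (n : ℕ) (t : Fin (n + 2) → ℝ), StrictMono t ∧ t 0 = 0 ∧ t (Fin.last (n + 1)) = 1 ∧
    ∀ i : Fin (n + 1), ∃ a b : ℝ, ∀ x : Icc (0:ℝ) 1,
      (x : ℝ) ∈ Icc (t i.castSucc) (t i.succ) → (f x : ℝ) = a * (x : ℝ) + b

open Filter Topology Equiv
open scoped commutatorElement

section Commutator

variable {G : Type*} [Group G] {a b c : G}

theorem commutatorElement_mul_inv_right (h : Commute a c) : ⁅a, b * c⁻¹⁆ = ⁅a, b⁆ := by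
  have h' : c⁻¹ * a⁻¹ = a⁻¹ * c⁻¹ := h.inv_inv.eq.symm
  simp only [commutatorElement_def, mul_inv_rev, inv_inv, ← mul_assoc]
  rw [mul_assoc (a * b), h', ← mul_assoc]
  group

theorem commutatorElement_mul_inv_left (h : Commute c b) : ⁅a * c⁻¹, b⁆ = ⁅a, b⁆ := by
  have h' : c⁻¹ * b = b * c⁻¹ := h.inv_left.eq
  simp only [commutatorElement_def, mul_inv_rev, inv_inv, ← mul_assoc]
  rw [mul_assoc a, h', ← mul_assoc]
  group

theorem commutatorElement_eq_mul_conj_inv (a b : G) : ⁅a, b⁆ = a * (b * a * b⁻¹)⁻¹ := by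
  group

end Commutator

section Displacement

variable {α : Type*}

def supt (S : Set (Perm α)) : Set α := {x | ∃ g ∈ S, g x ≠ x}

def HasDisplacement (H : Subgroup (Perm α)) : Prop :=
  ∀ F : Set (Perm α), F.Finite → F ⊆ H → ∃ w ∈ H, MapsTo w (supt F) (supt F)ᶜ

theorem disjoint_conj_of_mapsTo_compl {F : Set (Perm α)} {f g w : Perm α}
    (hw : MapsTo w (supt F) (supt F)ᶜ) (hf : f ∈ F) (hg : g ∈ F) :
    f.Disjoint (w * g * w⁻¹) := by
  intro y
  refine or_iff_not_imp_left.2 fun hfy => ?_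
  have hwy : w⁻¹ y ∉ supt F := fun h => hw h (by simpa using ⟨f, hf, hfy⟩)
  have hgy : g (w⁻¹ y) = w⁻¹ y := by_contra fun h => hwy ⟨g, hg, h⟩
  rw [Perm.mul_apply, Perm.mul_apply, hgy]
  simp

variable {H : Subgroup (Perm α)}

theorem HasDisplacement.commutator_le (hH : HasDisplacement H) :
    ⁅H, H⁆ ≤ ⁅⁅H, H⁆, ⁅H, H⁆⁆ := by
  rw [Subgroup.commutator_le]
  intro f hf g hg
  obtain ⟨h, hh, hmaps⟩ := hH {f, g} (toFinite _) (insert_subset hf (singleton_subset_iff.2 hg))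
  obtain ⟨k, hk, hmaps'⟩ := hH {f, g, h * g * h⁻¹} (toFinite _)
    (insert_subset hf (insert_subset hg (singleton_subset_iff.2
      (H.mul_mem (H.mul_mem hh hg) (H.inv_mem hh)))))
  have hf_gh : ⁅f, ⁅g, h⁆⁆ = ⁅f, g⁆ := by
    rw [commutatorElement_eq_mul_conj_inv g h]
    exact commutatorElement_mul_inv_right
      (disjoint_conj_of_mapsTo_compl hmaps (by simp) (by simp)).commute
  have hfk_gh : ⁅⁅f, k⁆, ⁅g, h⁆⁆ = ⁅f, ⁅g, h⁆⁆ := by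
    rw [commutatorElement_eq_mul_conj_inv f k, commutatorElement_eq_mul_conj_inv g h]
    refine commutatorElement_mul_inv_left (Perm.Disjoint.commute ?_)
    exact (disjoint_conj_of_mapsTo_compl hmaps' (by simp) (by simp)).symm.mul_right
      (disjoint_conj_of_mapsTo_compl hmaps' (by simp) (by simp)).symm.inv_right
  rw [← hf_gh, ← hfk_gh]
  exact Subgroup.commutator_mem_commutator (Subgroup.commutator_mem_commutator hf hk)
    (Subgroup.commutator_mem_commutator hg hh)

theorem HasDisplacement.supt_commutator (hH : HasDisplacement H) :
    supt ((⁅H, H⁆ : Subgroup (Perm α)) : Set (Perm α)) = supt H := by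
  refine Subset.antisymm (fun x ⟨g, hg, hgx⟩ => ⟨g, Subgroup.commutator_le_self H hg, hgx⟩) ?_
  rintro x ⟨f, hf, hfx⟩
  obtain ⟨w, hw, hmaps⟩ := hH {f} (toFinite _) (singleton_subset_iff.2 hf)
  refine ⟨⁅f, w⁆, Subgroup.commutator_mem_commutator hf hw, ?_⟩
  have hwx : (w * f * w⁻¹)⁻¹ x = x := by
    rw [Perm.inv_eq_iff_eq]
    exact ((disjoint_conj_of_mapsTo_compl hmaps rfl rfl x).resolve_left hfx).symm
  rwa [commutatorElement_eq_mul_conj_inv, Perm.mul_apply, hwx]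

end Displacement

section Dynamics

variable {α : Type*} {H : Subgroup (Perm α)}

theorem isOpen_supt [TopologicalSpace α] [T2Space α] {S : Set (Perm α)}
    (hcont : ∀ g ∈ S, Continuous g) : IsOpen (supt S) := by
  have : supt S = ⋃ g ∈ S, {x | g x ≠ x} := by ext; simp [supt]
  rw [this]
  exact isOpen_biUnion fun g hg => isOpen_ne_fun (hcont g hg) continuous_id

theorem closure_supt_subset [TopologicalSpace α] {F : Set (Perm α)} (hF : F.Finite)
    (hFH : F ⊆ H) (hfix : ∀ f ∈ H, ∀ c ∉ supt H, ∀ᶠ y in 𝓝 c, f y = y) :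
    closure (supt F) ⊆ supt H := by
  intro c hc
  by_contra hcH
  have hF : ∀ᶠ y in 𝓝 c, ∀ f ∈ F, f y = y :=
    (eventually_all_finite hF).2 fun f hf => hfix f (hFH hf) c hcH
  exact mem_closure_iff_frequently.1 hc (hF.mono fun y hy ⟨f, hf, hfy⟩ => hfy (hy f hf))

/-- For increasing `w`, this says that `w` maps `Icc p q` off itself. -/
def MovesOff [LT α] (w : Perm α) (p q : α) : Prop := q < w p ∨ w q < p

section LinearOrder

variable [LinearOrder α]

theorem MovesOff.inv {w : Perm α} {p q : α} (hw : StrictMono w) (h : MovesOff w p q) :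
    MovesOff w⁻¹ p q := by
  rcases h with h | h
  · right
    rwa [← hw.lt_iff_lt, ← Perm.mul_apply, mul_inv_cancel, Perm.one_apply]
  · left
    rwa [← hw.lt_iff_lt, ← Perm.mul_apply, mul_inv_cancel, Perm.one_apply]

variable (hsm : ∀ g ∈ H, StrictMono g)
include hsm

theorem exists_lt_apply_of_mem_supt {x : α} (hx : x ∈ supt H) : ∃ g ∈ H, x < g x := by
  obtain ⟨g, hg, hgx⟩ := hx
  rcases hgx.lt_or_gt with h | h
  · refine ⟨g⁻¹, H.inv_mem hg, ?_⟩
    rwa [← (hsm g hg).lt_iff_lt, ← Perm.mul_apply, mul_inv_cancel, Perm.one_apply]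
  · exact ⟨g, hg, h⟩

theorem uIcc_apply_subset_supt {g : Perm α} {x : α} (hg : g ∈ H) (hx : x ∈ supt H) :
    uIcc x (g x) ⊆ supt H := by
  intro c hc
  by_contra hcH
  have hgc : g c = c := by_contra fun h => hcH ⟨g, hg, h⟩
  rcases lt_trichotomy x c with hxc | rfl | hcx
  · have := hgc ▸ hsm g hg hxc
    rcases mem_uIcc.1 hc with hc | hc <;> order
  · exact hcH hx
  · have := hgc ▸ hsm g hg hcx
    rcases mem_uIcc.1 hc with hc | hc <;> order

theorem Icc_min_max_subset_supt {g : Perm α} {p q : α} (hg : g ∈ H) (hpq : p ≤ q)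
    (h : Icc p q ⊆ supt H) : Icc (min p (g p)) (max q (g q)) ⊆ supt H := by
  rintro y ⟨hy₁, hy₂⟩
  rcases lt_or_ge y p with hyp | hpy
  · exact uIcc_apply_subset_supt hsm hg (h ⟨le_rfl, hpq⟩)
      (mem_uIcc.2 (Or.inr ⟨min_le_iff.1 hy₁ |>.resolve_left hyp.not_ge, hyp.le⟩))
  rcases le_or_gt y q with hyq | hqy
  · exact h ⟨hpy, hyq⟩
  · exact uIcc_apply_subset_supt hsm hg (h ⟨hpq, le_rfl⟩)
      (mem_uIcc.2 (Or.inl ⟨hqy.le, le_max_iff.1 hy₂ |>.resolve_left hqy.not_ge⟩))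

end LinearOrder

theorem IsClosed.inter_ordConnectedComponent [LinearOrder α] [TopologicalSpace α]
    [OrderTopology α] {K U : Set α} (hK : IsClosed K) (hU : IsOpen U) (hKU : K ⊆ U) (x : α) :
    IsClosed (K ∩ ordConnectedComponent U x) := by
  refine isClosed_of_closure_subset fun z hz => ?_
  have hzK : z ∈ K := closure_minimal inter_subset_left hK hz
  obtain ⟨y, hyz, hyK, hyx⟩ := mem_closure_iff_nhds.1 hz _
    (ordConnectedComponent_mem_nhds.2 (hU.mem_nhds (hKU hzK)))
  exact ⟨hzK, mem_ordConnectedComponent_trans hyx (mem_ordConnectedComponent_comm.1 hyz)⟩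

theorem IsCompact.exists_Icc_inter_ordConnectedComponent [ConditionallyCompleteLinearOrder α]
    [TopologicalSpace α] [OrderTopology α] {K U : Set α} (hK : IsCompact K)
    (hU : IsOpen U) (hKU : K ⊆ U) {x : α} (hx : x ∈ K) :
    ∃ p q, Icc p q ⊆ ordConnectedComponent U x ∧ K ∩ ordConnectedComponent U x ⊆ Icc p q := by
  set L := K ∩ ordConnectedComponent U x
  have hL : IsCompact L :=
    hK.of_isClosed_subset (hK.isClosed.inter_ordConnectedComponent hU hKU x) inter_subset_left
  have hLne : L.Nonempty := ⟨x, hx, self_mem_ordConnectedComponent.2 (hKU hx)⟩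
  exact ⟨sInf L, sSup L, OrdConnected.out inferInstance (hL.sInf_mem hLne).2
    (hL.sSup_mem hLne).2, fun z hz => ⟨csInf_le hL.bddBelow hz, le_csSup hL.bddAbove hz⟩⟩

section OrderTopology

variable [ConditionallyCompleteLinearOrder α] [TopologicalSpace α] [OrderTopology α]
  (hcont : ∀ g ∈ H, Continuous g) (hsm : ∀ g ∈ H, StrictMono g)
include hcont hsm

theorem exists_lt_apply_of_Icc_subset_supt {p q : α} (h : Icc p q ⊆ supt H) :
    ∃ g ∈ H, q < g p := by
  by_contra! hle
  set S := (fun g : Perm α => g p) '' H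
  have hS : S.Nonempty := ⟨p, 1, H.one_mem, rfl⟩
  have hSq : ∀ z ∈ S, z ≤ q := by
    rintro _ ⟨g, hg, rfl⟩
    exact hle g hg
  have hbdd : BddAbove S := ⟨q, hSq⟩
  obtain ⟨g, hg, hlt⟩ := exists_lt_apply_of_mem_supt hsm
    (h ⟨le_csSup hbdd ⟨1, H.one_mem, rfl⟩, csSup_le hS hSq⟩)
  obtain ⟨_, hfg, f, hf, rfl⟩ := mem_closure_iff.1 (csSup_mem_closure hS hbdd) _
    (isOpen_lt continuous_const (hcont g hg)) hlt
  exact (le_csSup hbdd ⟨g * f, H.mul_mem hg hf, rfl⟩).not_gt hfg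

theorem exists_forall_movesOff {ι : Type*} (s : Finset ι) :
    ∀ p q : ι → α, (∀ i ∈ s, p i ≤ q i ∧ Icc (p i) (q i) ⊆ supt H) →
      ∃ w ∈ H, ∀ i ∈ s, MovesOff w (p i) (q i) := by
  classical
  induction s using Finset.induction_on with
  | empty => exact fun _ _ _ => ⟨1, H.one_mem, by simp⟩
  | insert i s _ ih =>
    intro p q hpq
    obtain ⟨hpqi, hi⟩ := hpq i (Finset.mem_insert_self i s)
    obtain ⟨g, hg, hgi⟩ := exists_lt_apply_of_Icc_subset_supt hcont hsm hi
    -- the other intervals are first enlarged to contain their images under `g`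
    obtain ⟨h, hh, hmov⟩ := ih (fun j => min (p j) (g (p j))) (fun j => max (q j) (g (q j)))
      fun j hj => have hj := hpq j (Finset.mem_insert_of_mem hj)
        ⟨(min_le_left _ _).trans (hj.1.trans (le_max_left _ _)),
          Icc_min_max_subset_supt hsm hg hj.1 hj.2⟩
    obtain ⟨h, hh, hqi, hmov⟩ : ∃ h ∈ H, q i ≤ h (q i) ∧
        ∀ j ∈ s, MovesOff h (min (p j) (g (p j))) (max (q j) (g (q j))) := by
      rcases le_or_gt (q i) (h (q i)) with hle | hlt
      · exact ⟨h, hh, hle, hmov⟩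
      · refine ⟨h⁻¹, H.inv_mem hh, ?_, fun j hj => (hmov j hj).inv (hsm h hh)⟩
        rw [← (hsm h hh).le_iff_le, ← Perm.mul_apply, mul_inv_cancel, Perm.one_apply]
        exact hlt.le
    have hmh := (hsm h hh).monotone
    refine ⟨h * g, H.mul_mem hh hg, fun j hj => ?_⟩
    simp only [MovesOff, Perm.mul_apply]
    rcases Finset.mem_insert.1 hj with rfl | hj
    · exact Or.inl (hqi.trans_lt (hsm h hh hgi))
    rcases hmov j hj with hj | hj
    · exact Or.inl ((le_max_left _ _).trans_lt (hj.trans_le (hmh (min_le_right _ _))))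
    · exact Or.inr ((hmh (le_max_right _ _)).trans_lt (hj.trans_le (min_le_left _ _)))

theorem hasDisplacement_of_eventually_fixed [CompactSpace α]
    (hfix : ∀ f ∈ H, ∀ c ∉ supt H, ∀ᶠ y in 𝓝 c, f y = y) : HasDisplacement H := by
  intro F hF hFH
  have hKH : closure (supt F) ⊆ supt H := closure_supt_subset hF hFH hfix
  have hH : IsOpen (supt (H : Set (Perm α))) := isOpen_supt hcont
  obtain ⟨t, htK, hcover⟩ := isClosed_closure.isCompact.elim_nhds_subcover
    (fun x => ordConnectedComponent (supt H) x)
    fun x hx => ordConnectedComponent_mem_nhds.2 (hH.mem_nhds (hKH hx))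
  choose! p q hpq hhull using fun x (hx : x ∈ t) =>
    isClosed_closure.isCompact.exists_Icc_inter_ordConnectedComponent hH hKH (htK x hx)
  have hx_hull : ∀ x ∈ t, p x ≤ x ∧ x ≤ q x := fun x hx =>
    hhull x hx ⟨htK x hx, self_mem_ordConnectedComponent.2 (hKH (htK x hx))⟩
  obtain ⟨w, hw, hmov⟩ := exists_forall_movesOff hcont hsm t p q fun x hx =>
    ⟨(hx_hull x hx).1.trans (hx_hull x hx).2, (hpq x hx).trans ordConnectedComponent_subset⟩
  refine ⟨w, hw, fun y hy hwy => ?_⟩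
  obtain ⟨x, hx, hyx⟩ := mem_iUnion₂.1 (hcover (subset_closure hy))
  -- `w` preserves the components of `supt H`
  have hwyx : w y ∈ ordConnectedComponent (supt H) x := mem_ordConnectedComponent_trans hyx
    (mem_ordConnectedComponent.2 (uIcc_apply_subset_supt hsm hw (hKH (subset_closure hy))))
  obtain ⟨hpy, hyq⟩ := hhull x hx ⟨subset_closure hy, hyx⟩
  obtain ⟨hpwy, hwyq⟩ := hhull x hx ⟨subset_closure hwy, hwyx⟩
  rcases hmov x hx with h | h
  · exact (h.trans_le ((hsm w hw).monotone hpy)).not_ge hwyq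
  · exact (((hsm w hw).monotone hyq).trans_lt h).not_ge hpwy

end OrderTopology

end Dynamics

section Germ

def eventuallyFixing {α : Type*} (l : Filter α) : Subgroup (Perm α) where
  carrier := {f | ∀ᶠ y in l, f y = y}
  one_mem' := by simp
  mul_mem' hf hg := (hf.and hg).mono fun y ⟨hfy, hgy⟩ => by rw [Perm.mul_apply, hgy, hfy]
  inv_mem' hf := hf.mono fun y hy => by rw [Perm.inv_eq_iff_eq, hy]

variable {s : Set ℝ} {l : Filter s} {c : s} {g g' : Perm s} {σ σ' : ℝ}

def HasSlopeAlong (l : Filter s) (c : s) (g : Perm s) (σ : ℝ) : Prop :=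
  ∀ᶠ y in l, (g y : ℝ) - c = σ * (y - c)

theorem hasSlopeAlong_one : HasSlopeAlong l c 1 1 := by
  simp [HasSlopeAlong]

theorem HasSlopeAlong.mul (hg : HasSlopeAlong l c g σ) (hg' : HasSlopeAlong l c g' σ')
    (ht : Tendsto g' l l) : HasSlopeAlong l c (g * g') (σ * σ') := by
  filter_upwards [hg', ht.eventually hg] with y h' h
  rw [Perm.mul_apply, h, h']
  ring

theorem HasSlopeAlong.unique [l.NeBot] (hl : ∀ᶠ y in l, y ≠ c) (h : HasSlopeAlong l c g σ)
    (h' : HasSlopeAlong l c g σ') : σ = σ' := by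
  obtain ⟨y, hy, h, h'⟩ := (hl.and (h.and h')).exists
  exact mul_right_cancel₀ (sub_ne_zero.2 (Subtype.coe_injective.ne hy)) (h.symm.trans h')

theorem HasSlopeAlong.eventually_apply_eq (h : HasSlopeAlong l c g 1) : ∀ᶠ y in l, g y = y :=
  h.mono fun y hy => Subtype.ext (by linarith)

theorem commutator_le_eventuallyFixing {G : Subgroup (Perm s)} (hl : ∀ᶠ y in l, y ≠ c)
    (hG : ∀ g ∈ G, Tendsto g l l ∧ ∃ σ, HasSlopeAlong l c g σ) :
    ⁅G, G⁆ ≤ eventuallyFixing l := by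
  rcases l.eq_or_neBot with rfl | _
  · exact fun f _ => (eventually_bot : ∀ᶠ y in ⊥, f y = y)
  choose! σ hσ using fun g hg => (hG g hg).2
  have hmul : ∀ g ∈ G, ∀ h ∈ G, HasSlopeAlong l c (g * h) (σ g * σ h) :=
    fun g hg h hh => (hσ g hg).mul (hσ h hh) (hG h hh).1
  have hinv : ∀ g ∈ G, σ g * σ g⁻¹ = 1 := fun g hg =>
    (mul_inv_cancel g ▸ hmul g hg _ (G.inv_mem hg)).unique hl hasSlopeAlong_one
  rw [Subgroup.commutator_le]
  intro g hg h hh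
  have := ((hmul g hg h hh).mul (hσ _ (G.inv_mem hg)) (hG _ (G.inv_mem hg)).1).mul
    (hσ _ (G.inv_mem hh)) (hG _ (G.inv_mem hh)).1
  rw [show σ g * σ h * σ g⁻¹ * σ h⁻¹ = (σ g * σ g⁻¹) * (σ h * σ h⁻¹) by ring, hinv g hg,
    hinv h hh, one_mul] at this
  exact this.eventually_apply_eq

theorem commutator_le_eventuallyFixing_nhdsWithin {G : Subgroup (Perm s)} {t : Set s}
    (hcont : ∀ g ∈ G, Continuous g) (hfix : ∀ g ∈ G, g c = c)
    (hmaps : ∀ g ∈ G, MapsTo g t t) (hct : c ∉ t)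
    (hslope : ∀ g ∈ G, ∃ σ, HasSlopeAlong (𝓝[t] c) c g σ) :
    ⁅G, G⁆ ≤ eventuallyFixing (𝓝[t] c) := by
  refine commutator_le_eventuallyFixing
    (eventually_mem_nhdsWithin.mono fun _ hy => ne_of_mem_of_not_mem hy hct)
    fun g hg => ⟨?_, hslope g hg⟩
  have := (hcont g hg).continuousWithinAt.tendsto_nhdsWithin (hmaps g hg) (x := c)
  rwa [hfix g hg] at this

end Germ

section PiecewiseLinear

theorem Fin.exists_castSucc_le_lt_succ {β : Type*} [LinearOrder β] {n : ℕ}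
    (t : Fin (n + 1) → β) {c : β} (h0 : t 0 ≤ c) (hn : c < t (Fin.last n)) :
    ∃ i : Fin n, t i.castSucc ≤ c ∧ c < t i.succ := by
  by_contra! h
  exact (Fin.induction (motive := fun i => t i ≤ c) h0 h (Fin.last n)).not_gt hn

theorem Fin.exists_castSucc_lt_le_succ {β : Type*} [LinearOrder β] {n : ℕ}
    (t : Fin (n + 1) → β) {c : β} (h0 : t 0 < c) (hn : c ≤ t (Fin.last n)) :
    ∃ i : Fin n, t i.castSucc < c ∧ c ≤ t i.succ := by
  by_contra! h
  exact (Fin.induction (motive := fun i => t i < c) h0 h (Fin.last n)).not_ge hn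

variable {g : Perm (Icc (0:ℝ) 1)} {c : Icc (0:ℝ) 1}

theorem IsPL.exists_hasSlopeAlong_nhdsGT (hg : IsPL g) (hc : g c = c) :
    ∃ σ, HasSlopeAlong (𝓝[>] c) c g σ := by
  obtain ⟨n, t, -, h0, h1, hpieces⟩ := hg
  rcases c.2.2.lt_or_eq with hc1 | hc1
  · obtain ⟨i, hti, hct⟩ :=
      Fin.exists_castSucc_le_lt_succ t (h0.trans_le c.2.1) (hc1.trans_eq h1.symm)
    obtain ⟨a, b, hab⟩ := hpieces i
    have hcab : (c : ℝ) = a * c + b := by simpa [hc] using hab c ⟨hti, hct.le⟩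
    have hpiece : ∀ᶠ y : Icc (0:ℝ) 1 in 𝓝[>] c, (y : ℝ) ∈ Ioo (c : ℝ) (t i.succ) :=
      (continuous_subtype_val.continuousWithinAt.tendsto_nhdsWithin fun _ hy => hy).eventually
        (Ioo_mem_nhdsGT hct)
    refine ⟨a, hpiece.mono fun y hy => ?_⟩
    rw [hab y ⟨hti.trans hy.1.le, hy.2.le⟩, mul_sub]
    linarith
  · have : Ioi c = ∅ :=
      eq_empty_of_forall_notMem fun y (hy : (c : ℝ) < y) => hy.not_ge (y.2.2.trans_eq hc1.symm)
    simp [HasSlopeAlong, this]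

theorem IsPL.exists_hasSlopeAlong_nhdsLT (hg : IsPL g) (hc : g c = c) :
    ∃ σ, HasSlopeAlong (𝓝[<] c) c g σ := by
  obtain ⟨n, t, -, h0, h1, hpieces⟩ := hg
  rcases c.2.1.lt_or_eq with hc0 | hc0
  · obtain ⟨i, htc, hct⟩ :=
      Fin.exists_castSucc_lt_le_succ t (h0.trans_lt hc0) (c.2.2.trans_eq h1.symm)
    obtain ⟨a, b, hab⟩ := hpieces i
    have hcab : (c : ℝ) = a * c + b := by simpa [hc] using hab c ⟨htc.le, hct⟩
    have hpiece : ∀ᶠ y : Icc (0:ℝ) 1 in 𝓝[<] c, (y : ℝ) ∈ Ioo (t i.castSucc) (c : ℝ) :=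
      (continuous_subtype_val.continuousWithinAt.tendsto_nhdsWithin fun _ hy => hy).eventually
        (Ioo_mem_nhdsLT htc)
    refine ⟨a, hpiece.mono fun y hy => ?_⟩
    rw [hab y ⟨hy.1.le, hy.2.le.trans hct⟩, mul_sub]
    linarith
  · have : Iio c = ∅ :=
      eq_empty_of_forall_notMem fun y (hy : (y : ℝ) < c) => hy.not_ge (hc0.symm.trans_le y.2.1)
    simp [HasSlopeAlong, this]

theorem eventually_apply_eq_of_mem_commutator {G : Subgroup (Perm (Icc (0:ℝ) 1))}
    (hcont : ∀ g ∈ G, Continuous g) (hsm : ∀ g ∈ G, StrictMono g) (hpl : ∀ g ∈ G, IsPL g)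
    {f : Perm (Icc (0:ℝ) 1)} (hf : f ∈ ⁅G, G⁆) (hc : c ∉ supt G) :
    ∀ᶠ y in 𝓝 c, f y = y := by
  have hfix : ∀ g ∈ G, g c = c := fun g hg => by_contra fun h => hc ⟨g, hg, h⟩
  have hlt : f ∈ eventuallyFixing (𝓝[<] c) :=
    commutator_le_eventuallyFixing_nhdsWithin hcont hfix
      (fun g hg y (hy : y < c) => (hsm g hg hy).trans_eq (hfix g hg)) (lt_irrefl c)
      (fun g hg => (hpl g hg).exists_hasSlopeAlong_nhdsLT (hfix g hg)) hf
  have hgt : f ∈ eventuallyFixing (𝓝[>] c) :=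
    commutator_le_eventuallyFixing_nhdsWithin hcont hfix
      (fun g hg y (hy : c < y) => (hfix g hg).symm.trans_lt (hsm g hg hy)) (lt_irrefl c)
      (fun g hg => (hpl g hg).exists_hasSlopeAlong_nhdsGT (hfix g hg)) hf
  rw [← nhdsNE_sup_pure, ← nhdsLT_sup_nhdsGT]
  exact eventually_sup.2 ⟨eventually_sup.2 ⟨hlt, hgt⟩,
    eventually_pure.2 (hfix f (Subgroup.commutator_le_self G hf))⟩

end PiecewiseLinear

theorem stmt3
    (G : Subgroup (Equiv.Perm (Icc (0:ℝ) 1)))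
    (hG : ∀ g ∈ G, Continuous (⇑(g : Equiv.Perm (Icc (0:ℝ) 1))) ∧ Monotone ⇑g ∧ IsPL g)
    (hsupp : {x | ∃ g ∈ ⁅G, G⁆, g x ≠ x} = {x | ∃ g ∈ G, g x ≠ x}) :
    ⁅⁅G, G⁆, ⁅G, G⁆⁆ = ⁅⁅⁅G, G⁆, ⁅G, G⁆⁆, ⁅⁅G, G⁆, ⁅G, G⁆⁆⁆ ∧
      {x | ∃ g ∈ ⁅⁅G, G⁆, ⁅G, G⁆⁆, g x ≠ x} = {x | ∃ g ∈ G, g x ≠ x} := by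
  have hsm : ∀ g ∈ G, StrictMono g := fun g hg =>
    (hG g hg).2.1.strictMono_of_injective g.injective
  have hG' : ∀ g ∈ ⁅G, G⁆, g ∈ G := fun g hg => Subgroup.commutator_le_self G hg
  have hsupp' : supt (⁅G, G⁆ : Subgroup (Perm (Icc (0:ℝ) 1))) =
      supt (G : Set (Perm (Icc (0:ℝ) 1))) := hsupp
  have hdisp : HasDisplacement ⁅G, G⁆ :=
    hasDisplacement_of_eventually_fixed (fun g hg => (hG g (hG' g hg)).1)
      (fun g hg => hsm g (hG' g hg)) fun f hf c hc =>
        eventually_apply_eq_of_mem_commutator (fun g hg => (hG g hg).1) hsm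
          (fun g hg => (hG g hg).2.2) hf (hsupp' ▸ hc)
  exact ⟨hdisp.commutator_le.antisymm (Subgroup.commutator_le_self _),
    hdisp.supt_commutator.trans hsupp⟩
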